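/- arXiv:1505.00819 — 2 statements merged into one kernel-verified Lean document; each statement's English description precedes it below -/
import Mathlib

section
/- Suppose sup_i F̂_{d,i}(h) ≤ f̂·h for all h ≤ h₀, where F̂_{d,i} is the CDF of the independent nonnegative random variable d̂_i, and let K ≥ 1, f̂ ≥ 1, h₀ ∈ (0, 1/f̂). If L ≥ max(2 f̂ K², 4 f̂ K/√η) for some η ∈ (0,1), then for all n with K/√n ≤ h₀, P( Σ_{i=1}^{⌊K√n⌋} 1(d̂_i ≤ K/√n) > L ) < η/2. -/
open MeasureTheory ProbabilityTheory

/-!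
The count is a sum of `⌊K√n⌋` independent Bernoulli variables with success probabilities at most
`f̂ K/√n`, so its mean and its variance are both at most `f̂ K²`. As `L ≥ 2 f̂ K²`, Chebyshev's
inequality bounds the probability of exceeding `L` by `f̂ K² / (L/2)² ≤ η / (4 f̂) < η/2`.
-/

section BoundedSum

variable {Ω ι : Type*} [MeasurableSpace Ω] {P : Measure Ω} [IsProbabilityMeasure P]

lemma memLp_of_mem_Icc {X : Ω → ℝ} {p : ENNReal} (hX : AEStronglyMeasurable X P)
    (h01 : ∀ ω, X ω ∈ Set.Icc 0 1) : MemLp X p P :=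
  MemLp.of_bound hX 1 <| .of_forall fun ω => by
    rw [Real.norm_of_nonneg (h01 ω).1]; exact (h01 ω).2

lemma variance_le_integral_of_mem_Icc {X : Ω → ℝ} (hX : AEStronglyMeasurable X P)
    (h01 : ∀ ω, X ω ∈ Set.Icc 0 1) : Var[X; P] ≤ P[X] := by
  have hXint : Integrable X P := (memLp_of_mem_Icc hX h01).integrable one_le_two
  refine (variance_le_expectation_sq hX).trans (integral_mono ?_ hXint fun ω => ?_)
  · exact (memLp_of_mem_Icc hX h01).integrable_sq
  · simpa [sq] using mul_le_of_le_one_left (h01 ω).1 (h01 ω).2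

lemma measure_lt_sum_le_of_mem_Icc {X : ι → Ω → ℝ} {s : Finset ι} {q c : ℝ}
    (hX : ∀ i, AEStronglyMeasurable (X i) P) (h01 : ∀ i ω, X i ω ∈ Set.Icc 0 1)
    (hindep : Set.Pairwise ↑s fun i j => X i ⟂ᵢ[P] X j)
    (hq : ∑ i ∈ s, P[X i] ≤ q) (hqc : q < c) :
    P {ω | c < ∑ i ∈ s, X i ω} ≤ ENNReal.ofReal (q / (c - q) ^ 2) := by
  have hmemLp : ∀ i ∈ s, MemLp (X i) 2 P := fun i _ => memLp_of_mem_Icc (hX i) (h01 i)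
  have hmean : P[∑ i ∈ s, X i] ≤ q := by
    simp only [Finset.sum_apply]
    rwa [integral_finsetSum s fun i hi => (hmemLp i hi).integrable one_le_two]
  have hvar : Var[∑ i ∈ s, X i; P] ≤ q := by
    rw [IndepFun.variance_sum hmemLp hindep]
    exact (Finset.sum_le_sum fun i _ => variance_le_integral_of_mem_Icc (hX i) (h01 i)).trans hq
  calc P {ω | c < ∑ i ∈ s, X i ω}
      ≤ P {ω | c - q ≤ |(∑ i ∈ s, X i) ω - P[∑ i ∈ s, X i]|} := by
        refine measure_mono fun ω (hω : c < ∑ i ∈ s, X i ω) => ?_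
        rw [← Finset.sum_apply] at hω
        have hdev : c - q ≤ (∑ i ∈ s, X i) ω - P[∑ i ∈ s, X i] := by linarith
        exact hdev.trans (le_abs_self _)
    _ ≤ ENNReal.ofReal (Var[∑ i ∈ s, X i; P] / (c - q) ^ 2) :=
        meas_ge_le_variance_div_sq (memLp_finsetSum' s hmemLp) (sub_pos.2 hqc)
    _ ≤ ENNReal.ofReal (q / (c - q) ^ 2) := by gcongr

end BoundedSum

lemma natFloor_mul_mul_div_le_sq (K x : ℝ) : (⌊K * x⌋₊ : ℝ) * (K / x) ≤ K ^ 2 := by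
  rcases lt_or_ge (K * x) 1 with hKx | hKx
  · simp [Nat.floor_eq_zero.2 hKx, sq_nonneg]
  have hx : x ≠ 0 := by rintro rfl; norm_num at hKx
  have hKdiv : 0 ≤ K / x := by
    rw [show K / x = K * x / x ^ 2 by field_simp]; positivity
  calc (⌊K * x⌋₊ : ℝ) * (K / x) ≤ K * x * (K / x) := by
        gcongr; exact Nat.floor_le (by linarith)
    _ = K ^ 2 := by field_simp

lemma div_sub_sq_lt_half {f K η L : ℝ} (hK : 1 ≤ K) (hf : 1 ≤ f) (hη : 0 < η)
    (hL : max (2 * f * K ^ 2) (4 * f * K / Real.sqrt η) ≤ L) :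
    f * K ^ 2 / (L - f * K ^ 2) ^ 2 < η / 2 := by
  have hL₁ : 2 * f * K ^ 2 ≤ L := (le_max_left _ _).trans hL
  have hL₂ : 4 * f * K ≤ L * Real.sqrt η :=
    (div_le_iff₀ (Real.sqrt_pos.2 hη)).1 ((le_max_right _ _).trans hL)
  have hLη : 16 * f ^ 2 * K ^ 2 ≤ L ^ 2 * η := by
    have := mul_self_le_mul_self (by positivity) hL₂
    rw [mul_mul_mul_comm L, Real.mul_self_sqrt hη.le] at this
    linarith
  have hgap : L / 2 ≤ L - f * K ^ 2 := by linarith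
  have hL0 : 0 < L := by nlinarith
  have hsq : L ^ 2 / 4 ≤ (L - f * K ^ 2) ^ 2 := by nlinarith
  rw [div_lt_iff₀ (by nlinarith)]
  have hfK : f * K ^ 2 ≤ f ^ 2 * K ^ 2 :=
    mul_le_mul_of_nonneg_right (by nlinarith) (sq_nonneg K)
  nlinarith [mul_le_mul_of_nonneg_left hsq hη.le]

theorem stmt12_general {Ω : Type*} [MeasurableSpace Ω] (P : Measure Ω) [IsProbabilityMeasure P]
    (dhat : ℕ → Ω → ℝ) (hmeas : ∀ i, Measurable (dhat i))
    (hindep : iIndepFun dhat P)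
    (fhat h₀ K η L : ℝ) (hK : 1 ≤ K) (hfhat : 1 ≤ fhat)
    (hη : η ∈ Set.Ioo (0:ℝ) 1)
    (hcdf : ∀ i, ∀ h : ℝ, 0 < h → h ≤ h₀ →
      P {ω | dhat i ω ≤ h} ≤ ENNReal.ofReal (fhat * h))
    (hL : max (2 * fhat * K ^ 2) (4 * fhat * K / Real.sqrt η) ≤ L) :
    ∀ n : ℕ, K / Real.sqrt n ≤ h₀ →
      P {ω | L < ∑ i ∈ Finset.range ⌊K * Real.sqrt n⌋₊,
          (if dhat i ω ≤ K / Real.sqrt n then (1:ℝ) else 0)} <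
        ENNReal.ofReal (η / 2) := by
  intro n hn
  have hL₀ : fhat * K ^ 2 < L := by
    nlinarith [le_max_left (2 * fhat * K ^ 2) (4 * fhat * K / √η)]
  rcases n.eq_zero_or_pos with rfl | hn₀
  · simp [(hL₀.trans' (by positivity)).not_gt, hη.1]
  set h := K / Real.sqrt n
  have hh : 0 < h := by positivity
  let g : ℝ → ℝ := fun x => if x ≤ h then 1 else 0
  have hg : Measurable g := Measurable.ite measurableSet_Iic measurable_const measurable_const
  have hmean : ∀ i, P[g ∘ dhat i] ≤ fhat * h := fun i => by
    have hind : g ∘ dhat i = (dhat i ⁻¹' Set.Iic h).indicator 1 := by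
      ext ω; by_cases hi : dhat i ω ≤ h <;> simp [g, hi]
    rw [hind, integral_indicator_one ((hmeas i) measurableSet_Iic)]
    exact ENNReal.toReal_le_of_le_ofReal (by positivity) (hcdf i h hh hn)
  have hsum : ∑ i ∈ Finset.range ⌊K * √n⌋₊, P[g ∘ dhat i] ≤ fhat * K ^ 2 := by
    refine (Finset.sum_le_card_nsmul _ _ _ fun i _ => hmean i).trans ?_
    rw [Finset.card_range, nsmul_eq_mul]
    nlinarith [natFloor_mul_mul_div_le_sq K √n]
  refine (measure_lt_sum_le_of_mem_Icc (X := fun i => g ∘ dhat i)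
    (fun i => (hg.comp (hmeas i)).aestronglyMeasurable) (fun i ω => ?_)
    (fun i _ j _ hij => (hindep.comp (fun _ => g) fun _ => hg).indepFun hij) hsum hL₀).trans_lt ?_
  · by_cases hi : dhat i ω ≤ h <;> simp [g, hi]
  · exact (ENNReal.ofReal_lt_ofReal_iff (by linarith [hη.1])).2
      (div_sub_sq_lt_half hK hfhat hη.1 hL)

/-- Core estimate in Proposition 5.15: if the residual deadlines `d̂_i` are independent with
CDFs uniformly bounded by `f̂·h` near zero, and `L ≥ max(2 f̂ K², 4 f̂ K/√η)`, then the
probability that more than `L` of the first `⌊K√n⌋` initial jobs have deadline `≤ K/√n` is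
less than `η/2`, whenever `K/√n ≤ h₀`. -/
theorem stmt12 {Ω : Type*} [MeasurableSpace Ω] (P : Measure Ω) [IsProbabilityMeasure P]
    (dhat : ℕ → Ω → ℝ) (hmeas : ∀ i, Measurable (dhat i))
    (hnn : ∀ i ω, 0 ≤ dhat i ω)
    (hindep : iIndepFun dhat P)
    (fhat h₀ K η L : ℝ) (hK : 1 ≤ K) (hfhat : 1 ≤ fhat)
    (hh₀ : h₀ ∈ Set.Ioo (0:ℝ) (1 / fhat)) (hη : η ∈ Set.Ioo (0:ℝ) 1)
    (hcdf : ∀ i, ∀ h : ℝ, 0 < h → h ≤ h₀ →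
      P {ω | dhat i ω ≤ h} ≤ ENNReal.ofReal (fhat * h))
    (hL : max (2 * fhat * K ^ 2) (4 * fhat * K / Real.sqrt η) ≤ L) :
    ∀ n : ℕ, K / Real.sqrt n ≤ h₀ →
      P {ω | L < ∑ i ∈ Finset.range ⌊K * Real.sqrt n⌋₊,
          (if dhat i ω ≤ K / Real.sqrt n then (1:ℝ) else 0)} <
        ENNReal.ofReal (η / 2) :=
  stmt12_general P dhat hmeas hindep fhat h₀ K η L hK hfhat hη hcdf hL
end

section
/- For the workload dynamics W(t) = W(0) − T(t) + Σ_{i=1}^{A(t)} (v_i/μ)·J_i with T(t) = ∫₀^t 1(Q(s)>0) ds and J_i ∈ {0,1}, the idle time increase over [u,v] satisfies I(v) − I(u) ≤ max(0, − inf_{s∈[u,v]} ( Σ_{i=A(u)+1}^{A(s)} (v_i/μ)·J_i − (s − u) ) ), where I(t) = t − T(t). -/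
/-!
Writing the arrivals after `u` as `Σ(s) = Σ_{i=A(u)+1}^{A(s)} (v_i/μ) J_i`, the workload equation
says `Σ(s) - (s - u) = W(s) - W(u) - (I(s) - I(u))`. The idle time `I` grows at rate at most one
and is constant on every interval where `W > 0`. If `W` has no zero on `[u, v]` then `I(v) = I(u)`.
Otherwise let `c` be the supremum of its zeros: `I(v) = I(c)`, and for a zero `s` close to `c`,
`I(c) - I(u) ≤ (c - s) + I(s) - I(u) = (c - s) - W(u) - (Σ(s) - (s - u))`, which is at most
`(c - s)` minus the infimum.
-/

open MeasureTheory Set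

namespace IdleTime

section
variable {g I : ℝ → ℝ}

theorem sub_eq_sub_setIntegral_Ioc (hg : ∀ a b, IntervalIntegrable g volume a b)
    (hI : ∀ t, I t = t - ∫ s in Ioc 0 t, g s) {a b : ℝ} (ha : 0 ≤ a) (hab : a ≤ b) :
    I b - I a = (b - a) - ∫ s in Ioc a b, g s := by
  have h := intervalIntegral.integral_interval_sub_left (hg 0 b) (hg 0 a)
  rw [intervalIntegral.integral_of_le (ha.trans hab), intervalIntegral.integral_of_le ha,
    intervalIntegral.integral_of_le hab] at h
  rw [hI, hI]
  linarith

theorem sub_le_of_nonneg (hg : ∀ a b, IntervalIntegrable g volume a b)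
    (hI : ∀ t, I t = t - ∫ s in Ioc 0 t, g s)
    (hg0 : ∀ s, 0 ≤ g s) {a b : ℝ} (ha : 0 ≤ a) (hab : a ≤ b) :
    I b - I a ≤ b - a := by
  rw [sub_eq_sub_setIntegral_Ioc hg hI ha hab]
  linarith [(integral_nonneg fun s => hg0 s : 0 ≤ ∫ s in Ioc a b, g s)]

theorem eq_of_eqOn_one (hg : ∀ a b, IntervalIntegrable g volume a b)
    (hI : ∀ t, I t = t - ∫ s in Ioc 0 t, g s) {a b : ℝ} (ha : 0 ≤ a) (hab : a ≤ b)
    (h1 : EqOn g 1 (Ioc a b)) :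
    I b = I a := by
  have hint : ∫ s in Ioc a b, g s = b - a := by
    rw [setIntegral_congr_fun measurableSet_Ioc h1]
    simp [hab]
  linarith [sub_eq_sub_setIntegral_Ioc hg hI ha hab]

end

theorem sub_le_max_zero_neg_sInf {I W : ℝ → ℝ} {u v : ℝ} (huv : u ≤ v)
    (hW : ∀ s ∈ Icc u v, 0 ≤ W s)
    (hI_le : ∀ a b, u ≤ a → a ≤ b → I b - I a ≤ b - a)
    (hI_flat : ∀ a b, u ≤ a → a ≤ b → (∀ s ∈ Ioc a b, 0 < W s) → I b = I a) :
    I v - I u ≤ max 0 (-sInf ((fun s => W s - W u - (I s - I u)) '' Icc u v)) := by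
  set Z := {s ∈ Icc u v | W s = 0}
  rcases Z.eq_empty_or_nonempty with hZ | hZ
  · have hpos : ∀ s ∈ Ioc u v, 0 < W s := fun s hs =>
      (hW s (Ioc_subset_Icc_self hs)).lt_of_ne' fun h0 => hZ.subset ⟨Ioc_subset_Icc_self hs, h0⟩
    rw [hI_flat u v le_rfl huv hpos, sub_self]
    exact le_max_left _ _
  have hZbdd : BddAbove Z := ⟨v, fun s hs => hs.1.2⟩
  set c := sSup Z
  have hcu : u ≤ c := hZ.elim fun s hs => hs.1.1.trans (le_csSup hZbdd hs)
  have hcv : c ≤ v := csSup_le hZ fun s hs => hs.1.2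
  -- the workload stays positive after its last zero `c`, so no idleness accrues on `(c, v]`
  have hIv : I v = I c := hI_flat c v hcu hcv fun s hs =>
    (hW s ⟨hcu.trans hs.1.le, hs.2⟩).lt_of_ne' fun h0 =>
      (le_csSup hZbdd ⟨⟨hcu.trans hs.1.le, hs.2⟩, h0⟩).not_gt hs.1
  have hbdd : BddBelow ((fun s => W s - W u - (I s - I u)) '' Icc u v) := by
    refine ⟨-W u - (v - u), ?_⟩
    rintro _ ⟨s, hs, rfl⟩
    linarith [hW s hs, hI_le u s le_rfl hs.1, hs.2]
  refine le_of_forall_pos_le_add fun ε hε => ?_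
  obtain ⟨s, hsZ, hcs⟩ := exists_lt_of_lt_csSup hZ (sub_lt_self c hε)
  have hinf := csInf_le hbdd (mem_image_of_mem (fun s => W s - W u - (I s - I u)) hsZ.1)
  simp only [hsZ.2] at hinf
  linarith [hI_le s c hsZ.1.1 (le_csSup hZbdd hsZ), hW u ⟨le_rfl, huv⟩, le_max_right 0
    (-sInf ((fun s => W s - W u - (I s - I u)) '' Icc u v))]

end IdleTime

theorem sum_Ioc_eq_workload_sub {A : ℝ → ℕ} {x : ℕ → ℝ} {W T : ℝ → ℝ}
    (hW : ∀ t, 0 ≤ t → W t = W 0 - T t + ∑ i ∈ Finset.Icc 1 (A t), x i)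
    {u s : ℝ} (hu : 0 ≤ u) (hus : u ≤ s) (hA : A u ≤ A s) :
    ∑ i ∈ Finset.Ioc (A u) (A s), x i = W s - W u + (T s - T u) := by
  have hIcc (n : ℕ) : Finset.Icc 1 n = Finset.Ioc 0 n := Finset.Icc_add_one_left_eq_Ioc 0 n
  rw [hW s (hu.trans hus), hW u hu, hIcc, hIcc,
    ← Finset.sum_Ioc_consecutive x (Nat.zero_le (A u)) hA]
  ring

theorem stmt19_general (μ : ℝ) (A : ℝ → ℕ) (hA : MonotoneOn A (Set.Ici 0))
    (sv J : ℕ → ℝ)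
    (Q W T I : ℝ → ℝ) (hQmeas : Measurable Q)
    (hT : ∀ t, T t = ∫ s in Set.Ioc (0:ℝ) t, (if 0 < Q s then (1:ℝ) else 0))
    (hI : ∀ t, I t = t - T t)
    (hW : ∀ t : ℝ, 0 ≤ t → W t = W 0 - T t + ∑ i ∈ Finset.Icc 1 (A t), (sv i / μ) * J i)
    (hWnn : ∀ t : ℝ, 0 ≤ t → 0 ≤ W t)
    (hQW : ∀ t : ℝ, 0 ≤ t → (0 < Q t ↔ 0 < W t))
    (u v : ℝ) (hu : 0 ≤ u) (huv : u ≤ v) :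
    I v - I u ≤ max 0 (- sInf ((fun s =>
      (∑ i ∈ Finset.Ioc (A u) (A s), (sv i / μ) * J i) - (s - u)) '' Set.Icc u v)) := by
  set busy : ℝ → ℝ := fun s => if 0 < Q s then 1 else 0
  have hbusy : ∀ a b, IntervalIntegrable busy volume a b := fun a b =>
    (intervalIntegrable_const (c := (1 : ℝ))).mono_fun'
      (Measurable.ite (measurableSet_lt measurable_const hQmeas) measurable_const
        measurable_const).aestronglyMeasurable
      (ae_of_all _ fun s => by by_cases h : 0 < Q s <;> simp [busy, h])
  have hI' : ∀ t, I t = t - ∫ s in Ioc 0 t, busy s := fun t => by rw [hI, hT]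
  have hincr : EqOn (fun s => (∑ i ∈ Finset.Ioc (A u) (A s), (sv i / μ) * J i) - (s - u))
      (fun s => W s - W u - (I s - I u)) (Icc u v) := fun s hs => by
    beta_reduce
    rw [sum_Ioc_eq_workload_sub hW hu hs.1 (hA hu (hu.trans hs.1) hs.1), hI, hI]
    ring
  rw [image_congr hincr]
  refine IdleTime.sub_le_max_zero_neg_sInf huv (fun s hs => hWnn s (hu.trans hs.1))
    (fun a b hua hab =>
      IdleTime.sub_le_of_nonneg hbusy hI' (fun s => by positivity) (hu.trans hua) hab)
    (fun a b hua hab hpos => IdleTime.eq_of_eqOn_one hbusy hI' (hu.trans hua) hab fun s hs => ?_)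
  simp [busy, (hQW s (hu.trans (hua.trans hs.1.le))).mpr (hpos s hs)]

/-- Pathwise bound on idleness accumulation (eq. tightnessW.2.2): for a single-server queue
with workload `W(t) = W(0) − T(t) + Σ_{i=1}^{A(t)} (v_i/μ) J_i`,
`I(v) − I(u) ≤ max(0, −inf_{s∈[u,v]} (Σ_{i=A(u)+1}^{A(s)} (v_i/μ) J_i − (s − u)))`. -/
theorem stmt19 (μ : ℝ) (hμ : 0 < μ) (A : ℝ → ℕ) (hA : MonotoneOn A (Set.Ici 0))
    (sv J : ℕ → ℝ) (hsv : ∀ i, 0 ≤ sv i) (hJ : ∀ i, J i = 0 ∨ J i = 1)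
    (Q W T I : ℝ → ℝ) (hQmeas : Measurable Q)
    (hT : ∀ t, T t = ∫ s in Set.Ioc (0:ℝ) t, (if 0 < Q s then (1:ℝ) else 0))
    (hI : ∀ t, I t = t - T t)
    (hW : ∀ t : ℝ, 0 ≤ t → W t = W 0 - T t + ∑ i ∈ Finset.Icc 1 (A t), (sv i / μ) * J i)
    (hWnn : ∀ t : ℝ, 0 ≤ t → 0 ≤ W t)
    (hQW : ∀ t : ℝ, 0 ≤ t → (0 < Q t ↔ 0 < W t))
    (u v : ℝ) (hu : 0 ≤ u) (huv : u ≤ v) :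
    I v - I u ≤ max 0 (- sInf ((fun s =>
      (∑ i ∈ Finset.Ioc (A u) (A s), (sv i / μ) * J i) - (s - u)) '' Set.Icc u v)) :=
  stmt19_general μ A hA sv J Q W T I hQmeas hT hI hW hWnn hQW u v hu huv
end
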